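/- arXiv:math/0508597 — 3 statements merged into one kernel-verified Lean document; each statement's English description precedes it below -/
import Mathlib

section
/- Let N ≥ 1, let n = (n_1,…,n_N) be a vector of positive integers, let q ≥ 1 be an integer, and let φ : ℕ → ℝ≥0 be nonincreasing. Then Σ over pairs of sites i, j ∈ I_n with ‖i − j‖ ≥ q of φ(‖i − j‖) is at most C_N · (Π_{k=1}^N n_k) · Σ_{t=q}^{‖n‖} t^{N−1} φ(t), where ‖·‖ is the Euclidean norm on ℤ^N, I_n = {i : 1 ≤ i_k ≤ n_k}, ‖n‖ = (n_1²+⋯+n_N²)^{1/2}, and C_N is a constant depending only on N. -/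
/-!
Replacing `φ(‖i - j‖)` by the larger `φ(⌊‖i - j‖⌋)` groups the pairs by the shell
`t ≤ ‖i - j‖ < t + 1` of their difference. Each difference vector `d` is realised by at most
`∏ k, n k` pairs, so it suffices that a shell of `ℤ^N` holds `O(t^(N-1))` points. A point `d` of
the shell has a coordinate with `N * |d k| ≥ t`; once the other coordinates are fixed, `d k ^ 2`
ranges over an interval of length `2t + 1`, which confines `|d k|` to a window of width `N`.
Hence each of the `(2t + 1)^(N-1)` choices of the other coordinates carries at most `4N + 2`
points of the shell.
-/

open Finset

lemma abs_le_abs_add_of_sq_add_bounds {x y R t : ℤ} {N : ℕ} (hx : t ≤ N * |x|)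
    (hlo : t ^ 2 ≤ x ^ 2 + R) (hhi : y ^ 2 + R < (t + 1) ^ 2) : |y| ≤ |x| + N := by
  -- `|y|² - |x|² ≤ 2t ≤ 2N|x|`, which rules out `|y| ≥ |x| + N + 1`.
  by_contra! h
  nlinarith [sq_abs x, sq_abs y, abs_nonneg x]

lemma card_le_of_abs_le_abs_add (X : Finset ℤ) (N : ℕ)
    (h : ∀ x ∈ X, ∀ y ∈ X, |y| ≤ |x| + N) : #X ≤ 4 * N + 2 := by
  obtain rfl | ⟨x, hx⟩ := X.eq_empty_or_nonempty
  · simp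
  have hX : X ⊆ Icc (-(|x| + N)) (-(|x| - N)) ∪ Icc (|x| - N) (|x| + N) := by
    intro y hy
    have h₁ := h x hx y hy
    have h₂ := h y hy x hx
    simp only [mem_union, mem_Icc]
    rcases abs_cases y with ⟨hy, -⟩ | ⟨hy, -⟩ <;> omega
  calc #X ≤ _ := card_le_card hX
    _ ≤ _ := card_union_le _ _
    _ = 4 * N + 2 := by simp only [Int.card_Icc]; omega

lemma sum_sq_eq_sq_add_sum_sq_update {ι R : Type*} [Fintype ι] [DecidableEq ι] [CommSemiring R]
    (d : ι → R) (k : ι) : ∑ j, d j ^ 2 = d k ^ 2 + ∑ j, Function.update d k 0 j ^ 2 := by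
  rw [← add_sum_erase _ _ (mem_univ k), ← add_sum_erase _ _ (mem_univ k)]
  simp only [Function.update_self]
  rw [zero_pow two_ne_zero, zero_add]
  congr 1
  exact sum_congr rfl fun j hj => by rw [Function.update_of_ne (ne_of_mem_erase hj)]

/-- The box `[-t, t]^N` only serves to make the shell `t ≤ ‖d‖ < t + 1` a `Finset`. -/
noncomputable def latticeShell (N t : ℕ) : Finset (Fin N → ℤ) :=
  {d ∈ Fintype.piFinset fun _ => Icc (-(t : ℤ)) t |
    (t : ℤ) ^ 2 ≤ ∑ k, d k ^ 2 ∧ ∑ k, d k ^ 2 < ((t : ℤ) + 1) ^ 2}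

lemma mem_latticeShell {N t : ℕ} {d : Fin N → ℤ} :
    d ∈ latticeShell N t ↔
      (t : ℤ) ^ 2 ≤ ∑ k, d k ^ 2 ∧ ∑ k, d k ^ 2 < ((t : ℤ) + 1) ^ 2 := by
  refine ⟨fun h => (mem_filter.1 h).2,
    fun h => mem_filter.2 ⟨Fintype.mem_piFinset.2 fun k => ?_, h⟩⟩
  have hk : d k ^ 2 < ((t : ℤ) + 1) ^ 2 :=
    (single_le_sum (fun j _ => sq_nonneg (d j)) (mem_univ k)).trans_lt h.2
  have := abs_lt_of_sq_lt_sq' hk (by positivity)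
  rw [mem_Icc]
  omega

lemma exists_le_mul_abs_of_mem_latticeShell {N t : ℕ} (hN : 1 ≤ N) {d : Fin N → ℤ}
    (hd : d ∈ latticeShell N t) : ∃ k, (t : ℤ) ≤ N * |d k| := by
  obtain ⟨k, -, hk⟩ := exists_max_image univ (fun j => |d j|) ⟨⟨0, hN⟩, mem_univ _⟩
  have hN' : (1 : ℤ) ≤ N := by exact_mod_cast hN
  refine ⟨k, (pow_le_pow_iff_left₀ (Nat.cast_nonneg t) (by positivity) two_ne_zero).1 ?_⟩
  calc (t : ℤ) ^ 2 ≤ ∑ j, d j ^ 2 := (mem_latticeShell.1 hd).1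
    _ ≤ ∑ _j : Fin N, d k ^ 2 := sum_le_sum fun j _ => sq_le_sq.2 (hk j (mem_univ j))
    _ = N * d k ^ 2 := by simp
    _ ≤ (N * |d k|) ^ 2 := by
      rw [mul_pow, sq_abs]
      gcongr
      exact le_self_pow₀ hN' two_ne_zero

lemma card_image_update_latticeShell_le (N t : ℕ) (k : Fin N) :
    #((latticeShell N t).image (Function.update · k 0)) ≤ (2 * t + 1) ^ (N - 1) := by
  have hsub : (latticeShell N t).image (Function.update · k 0) ⊆
      Fintype.piFinset (Function.update (fun _ => Icc (-(t : ℤ)) t) k {0}) := by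
    simp only [subset_iff, mem_image, Fintype.mem_piFinset]
    rintro _ ⟨d, hd, rfl⟩ j
    rcases eq_or_ne j k with rfl | hj
    · simp
    · simp only [Function.update_of_ne hj]
      exact Fintype.mem_piFinset.1 (mem_filter.1 hd).1 j
  refine (card_le_card hsub).trans_eq ?_
  rw [Fintype.card_piFinset, ← Function.comp_def card, Function.comp_update,
    prod_update_of_mem (mem_univ k)]
  simp only [Function.comp_apply, card_singleton, Int.card_Icc, prod_const, one_mul]
  rw [card_sdiff_of_subset (subset_univ _)]
  simp only [card_singleton, card_univ, Fintype.card_fin]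
  congr 1
  omega

lemma card_latticeShell_fiber_update_le {N t : ℕ} (k : Fin N) (e : Fin N → ℤ) :
    #{d ∈ {d ∈ latticeShell N t | (t : ℤ) ≤ N * |d k|} | Function.update d k 0 = e} ≤
      4 * N + 2 := by
  set F := {d ∈ {d ∈ latticeShell N t | (t : ℤ) ≤ N * |d k|} | Function.update d k 0 = e}
  have hF : ∀ d ∈ F, d = Function.update e k (d k) ∧ (t : ℤ) ≤ N * |d k| ∧
      (t : ℤ) ^ 2 ≤ d k ^ 2 + ∑ j, e j ^ 2 ∧
      d k ^ 2 + ∑ j, e j ^ 2 < ((t : ℤ) + 1) ^ 2 := by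
    intro d hd
    simp only [F, mem_filter] at hd
    obtain ⟨⟨hd, hdk⟩, rfl⟩ := hd
    rw [← sum_sq_eq_sq_add_sum_sq_update]
    exact ⟨by simp, hdk, mem_latticeShell.1 hd⟩
  have hinj : Set.InjOn (· k) (F : Set (Fin N → ℤ)) := fun d hd d' hd' h => by
    rw [(hF d hd).1, (hF d' hd').1]
    simp only at h
    rw [h]
  rw [← card_image_of_injOn hinj]
  refine card_le_of_abs_le_abs_add _ N ?_
  simp only [mem_image]
  rintro _ ⟨d, hd, rfl⟩ _ ⟨d', hd', rfl⟩
  exact abs_le_abs_add_of_sq_add_bounds (hF d hd).2.1 (hF d hd).2.2.1 (hF d' hd').2.2.2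

lemma card_latticeShell_le {N : ℕ} (hN : 1 ≤ N) (t : ℕ) :
    #(latticeShell N t) ≤ N * (4 * N + 2) * (2 * t + 1) ^ (N - 1) := by
  have hcover : latticeShell N t ⊆
      univ.biUnion fun k => {d ∈ latticeShell N t | (t : ℤ) ≤ N * |d k|} := by
    intro d hd
    obtain ⟨k, hk⟩ := exists_le_mul_abs_of_mem_latticeShell hN hd
    exact mem_biUnion.2 ⟨k, mem_univ k, mem_filter.2 ⟨hd, hk⟩⟩
  have hk : ∀ k : Fin N, #{d ∈ latticeShell N t | (t : ℤ) ≤ N * |d k|} ≤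
      (4 * N + 2) * (2 * t + 1) ^ (N - 1) := by
    intro k
    refine (card_le_mul_card_image _ _ fun e _ => card_latticeShell_fiber_update_le k e).trans ?_
    gcongr
    exact (card_le_card (image_subset_image (filter_subset _ _))).trans
      (card_image_update_latticeShell_le N t k)
  calc #(latticeShell N t) ≤ _ := card_le_card hcover
    _ ≤ _ := card_biUnion_le
    _ ≤ ∑ _k : Fin N, (4 * N + 2) * (2 * t + 1) ^ (N - 1) := sum_le_sum fun k _ => hk k
    _ = _ := by simp [mul_assoc]

lemma floor_sqrt_eq_iff {x : ℝ} (hx : 0 ≤ x) {t : ℕ} :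
    ⌊√x⌋₊ = t ↔ (t : ℝ) ^ 2 ≤ x ∧ x < ((t : ℝ) + 1) ^ 2 := by
  rw [Nat.floor_eq_iff (Real.sqrt_nonneg x), Real.le_sqrt (Nat.cast_nonneg t) hx,
    Real.sqrt_lt' (by positivity)]

lemma card_filter_sub_mem_le {α G : Type*} [DecidableEq α] [AddGroup G] [DecidableEq G]
    {f : α → G} (hf : Function.Injective f) (A : Finset α) (D : Finset G) :
    #{p ∈ A ×ˢ A | f p.1 - f p.2 ∈ D} ≤ #A * #D := by
  rw [mul_comm, ← card_product]
  refine card_le_card_of_injOn (fun p => (f p.1 - f p.2, p.2)) (fun p hp => ?_) ?_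
  · simp only [coe_filter, mem_product] at hp
    simp [hp.2, hp.1.2]
  · rintro ⟨i, j⟩ - ⟨i', j'⟩ - h
    simp only [Prod.mk.injEq] at h
    obtain ⟨h₁, rfl⟩ := h
    rw [sub_left_inj] at h₁
    rw [hf h₁]

lemma sum_le_sum_card_filter_floor_eq_mul {α : Type*} (S : Finset α) (T : Finset ℕ)
    {r : α → ℝ} {φ : ℝ → ℝ} (hr : ∀ p ∈ S, 0 ≤ r p) (hT : ∀ p ∈ S, ⌊r p⌋₊ ∈ T)
    (hφ : ∀ s t : ℝ, 0 ≤ s → s ≤ t → φ t ≤ φ s) :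
    ∑ p ∈ S, φ (r p) ≤ ∑ t ∈ T, #{p ∈ S | ⌊r p⌋₊ = t} * φ t := by
  calc ∑ p ∈ S, φ (r p) ≤ ∑ p ∈ S, φ ⌊r p⌋₊ :=
        sum_le_sum fun p hp => hφ _ _ (Nat.cast_nonneg _) (Nat.floor_le (hr p hp))
    _ = ∑ t ∈ T, #{p ∈ S | ⌊r p⌋₊ = t} * φ t := by
      rw [← sum_fiberwise_of_maps_to' hT (fun t : ℕ => φ t)]
      simp only [sum_const, nsmul_eq_mul]

lemma card_pairs_floor_dist_eq_le {N : ℕ} (hN : 1 ≤ N) (A : Finset (Fin N → ℕ)) (t : ℕ) :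
    #{p ∈ A ×ˢ A | ⌊√(∑ k, ((p.1 k : ℝ) - p.2 k) ^ 2)⌋₊ = t} ≤
      #A * (N * (4 * N + 2) * (2 * t + 1) ^ (N - 1)) := by
  set ι : (Fin N → ℕ) → Fin N → ℤ := fun i k => i k
  have hι : Function.Injective ι := Nat.cast_injective.comp_left
  have hsub : {p ∈ A ×ˢ A | ⌊√(∑ k, ((p.1 k : ℝ) - p.2 k) ^ 2)⌋₊ = t} ⊆
      {p ∈ A ×ˢ A | ι p.1 - ι p.2 ∈ latticeShell N t} := by
    refine monotone_filter_right _ fun p _ hp => ?_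
    have hcast :
        ∑ k, ((p.1 k : ℝ) - p.2 k) ^ 2 = ((∑ k, (ι p.1 - ι p.2) k ^ 2 : ℤ) : ℝ) := by
      push_cast [ι, Pi.sub_apply]; rfl
    rw [hcast, floor_sqrt_eq_iff (by positivity)] at hp
    exact mem_latticeShell.2 (by exact_mod_cast hp)
  calc _ ≤ _ := card_le_card hsub
    _ ≤ _ := card_filter_sub_mem_le hι A _
    _ ≤ _ := by gcongr; exact card_latticeShell_le hN t

lemma sqrt_sum_sq_sub_le {N : ℕ} {i j n : Fin N → ℕ} (hi : i ≤ n) (hj : j ≤ n) :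
    √(∑ k, ((i k : ℝ) - j k) ^ 2) ≤ √(∑ k, (n k : ℝ) ^ 2) := by
  refine Real.sqrt_le_sqrt (sum_le_sum fun k _ => ?_)
  have hik : (i k : ℝ) ≤ n k := by exact_mod_cast hi k
  have hjk : (j k : ℝ) ≤ n k := by exact_mod_cast hj k
  nlinarith [(i k).cast_nonneg (α := ℝ), (j k).cast_nonneg (α := ℝ)]

/-- Lattice-counting estimate: the sum of `φ(‖i-j‖)` over pairs of sites at distance
at least `q` is bounded by `C_N · n̂ · ∑_{t=q}^{‖n‖} t^{N-1} φ(t)`. -/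
theorem stmt_6 (N : ℕ) (hN : 1 ≤ N) :
    ∃ C : ℝ, 0 < C ∧
      ∀ (n : Fin N → ℕ), (∀ k, 1 ≤ n k) →
      ∀ (q : ℕ), 1 ≤ q →
      ∀ (φ : ℝ → ℝ), (∀ t, 0 ≤ φ t) → (∀ s t : ℝ, 0 ≤ s → s ≤ t → φ t ≤ φ s) →
        ∑ p ∈ ((Finset.Icc (1 : Fin N → ℕ) n) ×ˢ (Finset.Icc (1 : Fin N → ℕ) n)).filter
            (fun p => (q : ℝ) ≤ Real.sqrt (∑ k, ((p.1 k : ℝ) - (p.2 k : ℝ)) ^ 2)),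
            φ (Real.sqrt (∑ k, ((p.1 k : ℝ) - (p.2 k : ℝ)) ^ 2)) ≤
          C * (∏ k, (n k : ℝ)) *
            ∑ t ∈ Finset.Icc q ⌈Real.sqrt (∑ k, (n k : ℝ) ^ 2)⌉₊,
              (t : ℝ) ^ (N - 1) * φ t := by
  have hN' : (0 : ℝ) < N := by exact_mod_cast hN
  refine ⟨N * (4 * N + 2) * 3 ^ (N - 1), by positivity, fun n _ q hq φ hφ0 hφ => ?_⟩
  set I := Icc (1 : Fin N → ℕ) n
  have hmaps : ∀ p ∈ {p ∈ I ×ˢ I | (q : ℝ) ≤ √(∑ k, ((p.1 k : ℝ) - p.2 k) ^ 2)},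
      ⌊√(∑ k, ((p.1 k : ℝ) - p.2 k) ^ 2)⌋₊ ∈ Icc q ⌈√(∑ k, (n k : ℝ) ^ 2)⌉₊ := by
    intro p hp
    simp only [I, mem_filter, mem_product, mem_Icc] at hp
    obtain ⟨⟨⟨-, hp₁⟩, -, hp₂⟩, hqp⟩ := hp
    exact mem_Icc.2 ⟨Nat.le_floor hqp,
      (Nat.floor_le_floor (sqrt_sum_sq_sub_le hp₁ hp₂)).trans (Nat.floor_le_ceil _)⟩
  refine (sum_le_sum_card_filter_floor_eq_mul _ _ (fun p _ => Real.sqrt_nonneg _) hmaps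
    hφ).trans ?_
  rw [mul_sum]
  refine sum_le_sum fun t ht => ?_
  have ht₁ : (1 : ℝ) ≤ t := by exact_mod_cast hq.trans (mem_Icc.1 ht).1
  have hcard : #I = ∏ k, n k := by simp [I, Pi.card_Icc]
  have hcount : #{p ∈ {p ∈ I ×ˢ I | (q : ℝ) ≤ √(∑ k, ((p.1 k : ℝ) - p.2 k) ^ 2)} |
      ⌊√(∑ k, ((p.1 k : ℝ) - p.2 k) ^ 2)⌋₊ = t} ≤
        (∏ k, n k) * (N * (4 * N + 2) * (2 * t + 1) ^ (N - 1)) :=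
    hcard ▸ (card_le_card (filter_subset_filter _ (filter_subset _ _))).trans
      (card_pairs_floor_dist_eq_le hN I t)
  calc _ ≤ ((∏ k, n k) * (N * (4 * N + 2) * (2 * t + 1) ^ (N - 1)) : ℕ) * φ t :=
        mul_le_mul_of_nonneg_right (Nat.cast_le.2 hcount) (hφ0 t)
    _ ≤ (∏ k, (n k : ℝ)) * (N * (4 * N + 2) * (3 * t) ^ (N - 1)) * φ t :=
        mul_le_mul_of_nonneg_right (by push_cast; gcongr; linarith) (hφ0 t)
    _ = _ := by ring
end

section
/- Let X, X' be ℝ^d-valued random vectors with bounded joint density f_{X,X'} and common marginal density f satisfying |f_{X,X'}(u,v) − f(u)f(v)| ≤ C_0 for all u, v. Let Z = h(X,Y), Z' = h(X',Y') be real random variables with |Z| ≤ L and |Z'| ≤ L almost surely, and let K_c : ℝ^d → ℝ be integrable and bounded. Then for any x ∈ ℝ^d and b > 0, b^{−d} |Cov( Z K_c((x−X)/b), Z' K_c((x−X')/b) )| ≤ C L² b^d, where C depends only on C_0, ∫|K_c| and the bound on f (through ∫ K_c((x−u)/b) f(u) du/b^d ≤ C₁). -/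
open MeasureTheory ENNReal

/-!
With `g u = |K_c (b⁻¹ • (x - u))|`, the covariance is at most
`L² (E[g(X) g(X')] + E[g(X)] E[g(X')])`. Splitting the joint density as `f ⊗ f` plus an error
bounded by `C₀` gives `E[g(X) g(X')] ≤ E[g(X)]² + C₀ (∫ g)²`, and `∫ g = b^d ∫ |K_c|` by the
change of variables `u ↦ b⁻¹ • (x - u)`.

The laws only see `ofReal ∘ f`, so `E[g(X)] = ∫ g f⁺`, whereas the hypothesis on `C₁` is about
`∫ g f`. Where `f < 0` the joint density vanishes a.e., so `|f_{X,X'} - f ⊗ f| ≤ C₀` forces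
`f⁻(u) f⁻(v) ≤ C₀`; hence `(∫ g f⁻)² ≤ C₀ (∫ g)²` and `E[g(X)] ≤ C₁ b^d + √C₀ ∫ g`.
-/

lemma ae_nonpos_of_map_withDensity_ofReal {α β : Type*} [MeasurableSpace α] [MeasurableSpace β]
    {ν : Measure α} {ν' : Measure β} {φ : α → ℝ} {f : β → ℝ} {π : α → β}
    (hφ : Measurable φ) (hf : Measurable f) (hπ : Measurable π)
    (hmap : (ν.withDensity fun p => ENNReal.ofReal (φ p)).map π =
      ν'.withDensity fun u => ENNReal.ofReal (f u)) :
    ∀ᵐ p ∂ν, f (π p) < 0 → φ p ≤ 0 := by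
  have hN : MeasurableSet {u | f u < 0} := measurableSet_lt hf measurable_const
  have hf0 : (ν'.withDensity fun u => ENNReal.ofReal (f u)) {u | f u < 0} = 0 := by
    rw [withDensity_apply _ hN, setLIntegral_congr_fun hN fun u hu =>
      ENNReal.ofReal_eq_zero.mpr (le_of_lt hu), lintegral_zero]
  rw [← hmap, Measure.map_apply hπ hN,
    withDensity_apply_eq_zero' hφ.ennreal_ofReal.aemeasurable] at hf0
  filter_upwards [measure_eq_zero_iff_ae_notMem.mp hf0] with p hp hneg
  by_contra hpos
  exact hp ⟨by simpa using not_le.mp hpos, hneg⟩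

lemma posPart_le_posPart_mul_posPart_add {a s t c : ℝ} (h : |a - s * t| ≤ c)
    (hs : s < 0 → a ≤ 0) (ht : t < 0 → a ≤ 0) : a⁺ ≤ s⁺ * t⁺ + c := by
  have hc : 0 ≤ c := (abs_nonneg _).trans h
  refine max_le ?_ (add_nonneg (mul_nonneg (posPart_nonneg s) (posPart_nonneg t)) hc)
  rcases lt_or_ge s 0 with hs' | hs'
  · linarith [hs hs', mul_nonneg (posPart_nonneg s) (posPart_nonneg t)]
  rcases lt_or_ge t 0 with ht' | ht'
  · linarith [ht ht', mul_nonneg (posPart_nonneg s) (posPart_nonneg t)]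
  rw [posPart_eq_self.mpr hs', posPart_eq_self.mpr ht']
  linarith [(abs_le.mp h).2]

lemma negPart_mul_negPart_le {a s t c : ℝ} (h : |a - s * t| ≤ c) (hs : s < 0 → a ≤ 0) :
    s⁻ * t⁻ ≤ c := by
  have hc : 0 ≤ c := (abs_nonneg _).trans h
  rcases le_or_gt 0 s with hs' | hs'
  · rwa [negPart_eq_zero.mpr hs', zero_mul]
  rcases le_or_gt 0 t with ht' | ht'
  · rwa [negPart_eq_zero.mpr ht', mul_zero]
  rw [negPart_eq_neg.mpr hs'.le, negPart_eq_neg.mpr ht'.le]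
  linarith [(abs_le.mp h).1, hs hs']

lemma integral_mul_le_sqrt_mul_integral {α : Type*} [MeasurableSpace α] {ν : Measure α}
    [SFinite ν] {g h : α → ℝ} {c : ℝ} (hg0 : 0 ≤ g) (hg : Integrable g ν) (hh0 : 0 ≤ h)
    (hh : AEStronglyMeasurable h ν) (hc : ∀ᵐ p ∂ν.prod ν, h p.1 * h p.2 ≤ c) :
    Integrable (fun u => g u * h u) ν ∧ ∫ u, g u * h u ∂ν ≤ √c * ∫ u, g u ∂ν := by
  have hgh0 : 0 ≤ᵐ[ν] fun u => g u * h u := .of_forall fun u => mul_nonneg (hg0 u) (hh0 u)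
  have hgh : AEMeasurable (fun u => ENNReal.ofReal (g u * h u)) ν :=
    (hg.aestronglyMeasurable.mul hh).aemeasurable.ennreal_ofReal
  have hg' : AEMeasurable (fun u => ENNReal.ofReal (g u)) ν :=
    hg.aestronglyMeasurable.aemeasurable.ennreal_ofReal
  -- Squaring turns the integral into one over `ν.prod ν`, where `h ⊗ h ≤ c`.
  have hsq : (∫⁻ u, ENNReal.ofReal (g u * h u) ∂ν) ^ 2 ≤
      ENNReal.ofReal (√c * ∫ u, g u ∂ν) ^ 2 := calc
    _ = ∫⁻ p, ENNReal.ofReal (g p.1 * h p.1) * ENNReal.ofReal (g p.2 * h p.2) ∂ν.prod ν := by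
      rw [sq, lintegral_prod_mul hgh hgh]
    _ ≤ ∫⁻ p, ENNReal.ofReal c * (ENNReal.ofReal (g p.1) * ENNReal.ofReal (g p.2)) ∂ν.prod ν := by
      refine lintegral_mono_ae (hc.mono fun p hp => ?_)
      have hgg : 0 ≤ g p.1 * g p.2 := mul_nonneg (hg0 _) (hg0 _)
      rw [← ENNReal.ofReal_mul (mul_nonneg (hg0 _) (hh0 _)), ← ENNReal.ofReal_mul (hg0 _),
        ← ENNReal.ofReal_mul' hgg]
      refine ENNReal.ofReal_le_ofReal ?_
      nlinarith
    _ = ENNReal.ofReal c * (∫⁻ u, ENNReal.ofReal (g u) ∂ν) ^ 2 := by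
      rw [lintegral_const_mul' _ _ ofReal_ne_top, lintegral_prod_mul hg' hg', sq]
    _ ≤ ENNReal.ofReal (√c * ∫ u, g u ∂ν) ^ 2 := by
      rw [← ofReal_integral_eq_lintegral_ofReal hg (.of_forall hg0),
        ENNReal.ofReal_mul (Real.sqrt_nonneg c), mul_pow, ← ENNReal.ofReal_pow (Real.sqrt_nonneg c),
        Real.sq_sqrt']
      gcongr
      exact le_max_left c 0
  have hle := (ENNReal.pow_le_pow_left_iff two_ne_zero).mp hsq
  refine ⟨⟨hg.aestronglyMeasurable.mul hh, ?_⟩, ?_⟩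
  · rw [hasFiniteIntegral_iff_ofReal hgh0]
    exact hle.trans_lt ofReal_lt_top
  · rw [integral_eq_lintegral_of_nonneg_ae hgh0 (hg.aestronglyMeasurable.mul hh)]
    exact ENNReal.toReal_le_of_le_ofReal
      (mul_nonneg (Real.sqrt_nonneg c) (integral_nonneg hg0)) hle

lemma abs_integral_mul_le_of_abs_le {Ω : Type*} [MeasurableSpace Ω] {μ : Measure Ω}
    {Z W : Ω → ℝ} {L : ℝ} (hZ : ∀ᵐ ω ∂μ, |Z ω| ≤ L) (hW : Integrable W μ) :
    |∫ ω, Z ω * W ω ∂μ| ≤ L * ∫ ω, |W ω| ∂μ := by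
  calc |∫ ω, Z ω * W ω ∂μ| ≤ ∫ ω, L * |W ω| ∂μ := by
        rw [← Real.norm_eq_abs]
        refine norm_integral_le_of_norm_le (hW.abs.const_mul L) (hZ.mono fun ω hω => ?_)
        rw [Real.norm_eq_abs, abs_mul]
        exact mul_le_mul_of_nonneg_right hω (abs_nonneg _)
    _ = L * ∫ ω, |W ω| ∂μ := integral_const_mul L _

lemma abs_integral_mul_sub_mul_integral_le {Ω : Type*} [MeasurableSpace Ω] {μ : Measure Ω}
    {Z Z' W W' : Ω → ℝ} {L : ℝ} (hZ : ∀ᵐ ω ∂μ, |Z ω| ≤ L) (hZ' : ∀ᵐ ω ∂μ, |Z' ω| ≤ L)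
    (hW : Integrable W μ) (hW' : Integrable W' μ) (hWW' : Integrable (fun ω => W ω * W' ω) μ) :
    |∫ ω, (Z ω * W ω) * (Z' ω * W' ω) ∂μ - (∫ ω, Z ω * W ω ∂μ) * ∫ ω, Z' ω * W' ω ∂μ| ≤
      L ^ 2 * (∫ ω, |W ω * W' ω| ∂μ + (∫ ω, |W ω| ∂μ) * ∫ ω, |W' ω| ∂μ) := by
  have hZZ' : ∀ᵐ ω ∂μ, |Z ω * Z' ω| ≤ L ^ 2 := by
    filter_upwards [hZ, hZ'] with ω h h'
    rw [abs_mul, sq]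
    exact mul_le_mul h h' (abs_nonneg _) ((abs_nonneg _).trans h)
  have hsecond := abs_integral_mul_le_of_abs_le hZZ' hWW'
  have hfirst := abs_integral_mul_le_of_abs_le hZ hW
  have hfirst' := abs_integral_mul_le_of_abs_le hZ' hW'
  have hprod : |(∫ ω, Z ω * W ω ∂μ) * ∫ ω, Z' ω * W' ω ∂μ| ≤
      L ^ 2 * ((∫ ω, |W ω| ∂μ) * ∫ ω, |W' ω| ∂μ) := by
    rw [abs_mul]
    calc _ ≤ (L * ∫ ω, |W ω| ∂μ) * (L * ∫ ω, |W' ω| ∂μ) :=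
          mul_le_mul hfirst hfirst' (abs_nonneg _) ((abs_nonneg _).trans hfirst)
      _ = _ := by ring
  have hrearr : ∫ ω, (Z ω * W ω) * (Z' ω * W' ω) ∂μ = ∫ ω, (Z ω * Z' ω) * (W ω * W' ω) ∂μ := by
    congr 1; ext ω; ring
  rw [hrearr]
  linarith [abs_sub (∫ ω, (Z ω * Z' ω) * (W ω * W' ω) ∂μ)
    ((∫ ω, Z ω * W ω ∂μ) * ∫ ω, Z' ω * W' ω ∂μ)]

section Densities

variable {Ω E : Type*} [MeasurableSpace Ω] [MeasurableSpace E] {μ : Measure Ω} {ν : Measure E}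

lemma integral_comp_eq_integral_posPart_mul {X : Ω → E} {ρ φ : E → ℝ} (hX : AEMeasurable X μ)
    (hρ : Measurable ρ) (hlaw : μ.map X = ν.withDensity fun u => ENNReal.ofReal (ρ u))
    (hφ : AEStronglyMeasurable φ ν) :
    ∫ ω, φ (X ω) ∂μ = ∫ u, (ρ u)⁺ * φ u ∂ν := by
  have hac : μ.map X ≪ ν := hlaw ▸ withDensity_absolutelyContinuous _ _
  rw [← integral_map hX (hφ.mono_ac hac), hlaw, integral_withDensity_eq_integral_toReal_smul
    hρ.ennreal_ofReal (.of_forall fun _ => ofReal_lt_top)]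
  simp only [ENNReal.toReal_ofReal', smul_eq_mul]
  rfl

lemma integrable_posPart_of_map_eq_withDensity [IsFiniteMeasure μ] {X : Ω → E} {ρ : E → ℝ}
    (hρ : Measurable ρ) (hlaw : μ.map X = ν.withDensity fun u => ENNReal.ofReal (ρ u)) :
    Integrable (fun u => (ρ u)⁺) ν := by
  have hfin : ∫⁻ u, ENNReal.ofReal (ρ u) ∂ν ≠ ⊤ := by
    rw [← setLIntegral_univ, ← withDensity_apply _ MeasurableSet.univ, ← hlaw]
    exact measure_ne_top _ _
  have h := integrable_toReal_of_lintegral_ne_top hρ.ennreal_ofReal.aemeasurable hfin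
  simp only [ENNReal.toReal_ofReal'] at h
  exact h

structure HasJointDensity (μ : Measure Ω) (ν : Measure E) (X X' : Ω → E) (f : E → ℝ)
    (fj : E → E → ℝ) : Prop where
  measurable_fst : Measurable X
  measurable_snd : Measurable X'
  measurable_density : Measurable f
  measurable_jointDensity : Measurable fun p : E × E => fj p.1 p.2
  map_pair : μ.map (fun ω => (X ω, X' ω)) =
    (ν.prod ν).withDensity fun p => ENNReal.ofReal (fj p.1 p.2)
  map_fst : μ.map X = ν.withDensity fun u => ENNReal.ofReal (f u)
  map_snd : μ.map X' = ν.withDensity fun u => ENNReal.ofReal (f u)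

variable {X X' : Ω → E} {f : E → ℝ} {fj : E → E → ℝ} {C₀ : ℝ}

lemma ae_density_nonpos_of_marginal_neg (hD : HasJointDensity μ ν X X' f fj) :
    ∀ᵐ p ∂ν.prod ν, (f p.1 < 0 → fj p.1 p.2 ≤ 0) ∧ (f p.2 < 0 → fj p.1 p.2 ≤ 0) := by
  have hpair := hD.measurable_fst.prodMk hD.measurable_snd
  refine (ae_nonpos_of_map_withDensity_ofReal (ν' := ν) hD.measurable_jointDensity
    hD.measurable_density measurable_fst ?_).and (ae_nonpos_of_map_withDensity_ofReal (ν' := ν)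
    hD.measurable_jointDensity hD.measurable_density measurable_snd ?_)
  · rw [← hD.map_pair, Measure.map_map measurable_fst hpair, ← hD.map_fst]
    rfl
  · rw [← hD.map_pair, Measure.map_map measurable_snd hpair, ← hD.map_snd]
    rfl

lemma integral_comp_le_integral_mul_add [IsFiniteMeasure μ] [SFinite ν] {g : E → ℝ} {B : ℝ}
    (hg0 : 0 ≤ g) (hgB : ∀ u, g u ≤ B) (hg : Integrable g ν)
    (hD : HasJointDensity μ ν X X' f fj)
    (hC₀ : ∀ u v, |fj u v - f u * f v| ≤ C₀) :
    ∫ ω, g (X ω) ∂μ ≤ ∫ u, g u * f u ∂ν + √C₀ * ∫ u, g u ∂ν := by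
  -- `f` may be negative; `(f u)⁻ * (f v)⁻ ≤ C₀` bounds the correction `∫ g f⁻`.
  have hneg : ∀ᵐ p ∂ν.prod ν, (f p.1)⁻ * (f p.2)⁻ ≤ C₀ :=
    (ae_density_nonpos_of_marginal_neg hD).mono
      fun p hp => negPart_mul_negPart_le (hC₀ p.1 p.2) hp.1
  obtain ⟨hgneg, hgneg_le⟩ := integral_mul_le_sqrt_mul_integral hg0 hg
    (fun u => negPart_nonneg (f u)) hD.measurable_density.negPart.aestronglyMeasurable hneg
  have hgpos : Integrable (fun u => g u * (f u)⁺) ν :=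
    (integrable_posPart_of_map_eq_withDensity hD.measurable_density hD.map_fst).bdd_mul hg.aestronglyMeasurable
      (c := B) (.of_forall fun u => by rw [Real.norm_of_nonneg (hg0 u)]; exact hgB u)
  have hsplit : ∀ u, g u * (f u)⁺ = g u * f u + g u * (f u)⁻ := fun u => by
    rw [← mul_add, ← sub_eq_iff_eq_add.mp (posPart_sub_negPart (f u))]
  have hgf : Integrable (fun u => g u * f u) ν := by
    refine (hgpos.sub hgneg).congr (.of_forall fun u => ?_)
    simp only [Pi.sub_apply, hsplit, add_sub_cancel_right]
  calc ∫ ω, g (X ω) ∂μ = ∫ u, g u * (f u)⁺ ∂ν := by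
        rw [integral_comp_eq_integral_posPart_mul hD.measurable_fst.aemeasurable hD.measurable_density hD.map_fst hg.aestronglyMeasurable]
        simp only [mul_comm]
    _ = ∫ u, g u * f u ∂ν + ∫ u, g u * (f u)⁻ ∂ν := by
        simp only [hsplit]; exact integral_add hgf hgneg
    _ ≤ ∫ u, g u * f u ∂ν + √C₀ * ∫ u, g u ∂ν := by gcongr

lemma integral_comp_mul_comp_le [IsFiniteMeasure μ] [SFinite ν] {g : E → ℝ} {B : ℝ}
    (hg0 : 0 ≤ g) (hgB : ∀ u, g u ≤ B) (hg : Integrable g ν)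
    (hD : HasJointDensity μ ν X X' f fj)
    (hC₀ : ∀ u v, |fj u v - f u * f v| ≤ C₀) :
    ∫ ω, g (X ω) * g (X' ω) ∂μ ≤ (∫ ω, g (X ω) ∂μ) ^ 2 + C₀ * (∫ u, g u ∂ν) ^ 2 := by
  have hjoint : ∀ᵐ p ∂ν.prod ν, (fj p.1 p.2)⁺ ≤ (f p.1)⁺ * (f p.2)⁺ + C₀ :=
    (ae_density_nonpos_of_marginal_neg hD).mono
      fun p hp => posPart_le_posPart_mul_posPart_add (hC₀ p.1 p.2) hp.1 hp.2
  have hgpos : Integrable (fun u => (f u)⁺ * g u) ν :=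
    (integrable_posPart_of_map_eq_withDensity hD.measurable_density hD.map_fst).mul_bdd hg.aestronglyMeasurable
      (c := B) (.of_forall fun u => by rw [Real.norm_of_nonneg (hg0 u)]; exact hgB u)
  have hgg := hg.mul_prod hg
  rw [integral_comp_eq_integral_posPart_mul hD.measurable_fst.aemeasurable hD.measurable_density hD.map_fst hg.aestronglyMeasurable]
  calc ∫ ω, g (X ω) * g (X' ω) ∂μ = ∫ p, (fj p.1 p.2)⁺ * (g p.1 * g p.2) ∂ν.prod ν :=
        integral_comp_eq_integral_posPart_mul (ν := ν.prod ν) (ρ := fun p => fj p.1 p.2)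
          (φ := fun p => g p.1 * g p.2) (hD.measurable_fst.prodMk hD.measurable_snd).aemeasurable
          hD.measurable_jointDensity hD.map_pair
          hgg.aestronglyMeasurable
    _ ≤ ∫ p, ((f p.1)⁺ * g p.1) * ((f p.2)⁺ * g p.2) + C₀ * (g p.1 * g p.2) ∂ν.prod ν := by
        refine integral_mono_of_nonneg (.of_forall fun p => ?_)
          ((hgpos.mul_prod hgpos).add (hgg.const_mul C₀)) (hjoint.mono fun p hp => ?_)
        · exact mul_nonneg (posPart_nonneg _) (mul_nonneg (hg0 _) (hg0 _))
        · calc (fj p.1 p.2)⁺ * (g p.1 * g p.2)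
              ≤ ((f p.1)⁺ * (f p.2)⁺ + C₀) * (g p.1 * g p.2) :=
                mul_le_mul_of_nonneg_right hp (mul_nonneg (hg0 p.1) (hg0 p.2))
            _ = _ := by ring
    _ = (∫ u, (f u)⁺ * g u ∂ν) ^ 2 + C₀ * (∫ u, g u ∂ν) ^ 2 := by
        rw [integral_add (hgpos.mul_prod hgpos) (hgg.const_mul C₀), integral_const_mul,
          integral_prod_mul (fun u => (f u)⁺ * g u) (fun u => (f u)⁺ * g u),
          integral_prod_mul g g, sq, sq]

lemma abs_integral_comp_mul_sub_le [IsFiniteMeasure μ] [SFinite ν] {φ : E → ℝ} {B L : ℝ}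
    {Z Z' : Ω → ℝ} (hφ : Integrable φ ν) (hφB : ∀ u, |φ u| ≤ B)
    (hZ : ∀ᵐ ω ∂μ, |Z ω| ≤ L) (hZ' : ∀ᵐ ω ∂μ, |Z' ω| ≤ L)
    (hD : HasJointDensity μ ν X X' f fj)
    (hC₀ : ∀ u v, |fj u v - f u * f v| ≤ C₀) :
    |∫ ω, (Z ω * φ (X ω)) * (Z' ω * φ (X' ω)) ∂μ -
        (∫ ω, Z ω * φ (X ω) ∂μ) * ∫ ω, Z' ω * φ (X' ω) ∂μ| ≤
      L ^ 2 * (2 * (∫ ω, |φ (X ω)| ∂μ) ^ 2 + C₀ * (∫ u, |φ u| ∂ν) ^ 2) := by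
  have hint : ∀ {Y : Ω → E}, Measurable Y →
      μ.map Y = (ν.withDensity fun u => ENNReal.ofReal (f u)) →
      Integrable (fun ω => φ (Y ω)) μ := fun hY hlawY =>
    .of_bound ((hφ.aestronglyMeasurable.mono_ac
      (hlawY ▸ withDensity_absolutelyContinuous _ _)).comp_aemeasurable hY.aemeasurable)
      B (.of_forall fun ω => hφB _)
  have hW := hint hD.measurable_fst hD.map_fst
  have hW' := hint hD.measurable_snd hD.map_snd
  have hWW' : Integrable (fun ω => φ (X ω) * φ (X' ω)) μ :=
    hW.mul_bdd hW'.aestronglyMeasurable (c := B) (.of_forall fun ω => hφB _)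
  have hsame : ∫ ω, |φ (X' ω)| ∂μ = ∫ ω, |φ (X ω)| ∂μ := by
    rw [integral_comp_eq_integral_posPart_mul hD.measurable_fst.aemeasurable hD.measurable_density hD.map_fst
        hφ.abs.aestronglyMeasurable,
      integral_comp_eq_integral_posPart_mul hD.measurable_snd.aemeasurable hD.measurable_density hD.map_snd
        hφ.abs.aestronglyMeasurable]
  have hsecond := integral_comp_mul_comp_le (g := fun u => |φ u|) (fun u => abs_nonneg _) hφB
    hφ.abs hD hC₀
  refine (abs_integral_mul_sub_mul_integral_le hZ hZ' hW hW' hWW').trans ?_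
  simp only [abs_mul, hsame]
  exact mul_le_mul_of_nonneg_left (by linarith) (sq_nonneg L)

end Densities

lemma integral_comp_inv_smul_sub {E : Type*} [NormedAddCommGroup E] [NormedSpace ℝ E]
    [MeasurableSpace E] [BorelSpace E] [FiniteDimensional ℝ E] (μ : Measure E)
    [μ.IsAddHaarMeasure] (φ : E → ℝ) (x : E) {b : ℝ} (hb : 0 < b) :
    ∫ u, φ (b⁻¹ • (x - u)) ∂μ = b ^ Module.finrank ℝ E * ∫ u, φ u ∂μ := by
  rw [integral_sub_left_eq_self (fun v => φ (b⁻¹ • v)) μ x, Measure.integral_comp_smul, inv_pow,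
    inv_inv, abs_of_pos (by positivity), smul_eq_mul]

theorem stmt_9_general (d : ℕ) (C₀ C₁ KI : ℝ)
    (hC₀ : 0 ≤ C₀) :
    ∃ C : ℝ, 0 < C ∧
      ∀ (Ω : Type) [m0 : MeasurableSpace Ω] (μ : Measure Ω),
        IsProbabilityMeasure μ →
      ∀ (X X' : Ω → (Fin d → ℝ)) (Y Y' : Ω → ℝ)
        (h : (Fin d → ℝ) → ℝ → ℝ) (f : (Fin d → ℝ) → ℝ)
        (fj : (Fin d → ℝ) → (Fin d → ℝ) → ℝ)
        (Kc : (Fin d → ℝ) → ℝ) (x : Fin d → ℝ) (b L : ℝ), 0 < b → 0 < L →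
        Measurable (fun ω => (X ω, X' ω, Y ω, Y' ω)) →
        Measurable f → Measurable (fun p : (Fin d → ℝ) × (Fin d → ℝ) => fj p.1 p.2) →
        -- joint density of `(X, X')` and common marginal density `f`
        μ.map (fun ω => (X ω, X' ω)) =
          (volume : Measure ((Fin d → ℝ) × (Fin d → ℝ))).withDensity
            (fun p => ENNReal.ofReal (fj p.1 p.2)) →
        μ.map X = (volume : Measure (Fin d → ℝ)).withDensity
            (fun u => ENNReal.ofReal (f u)) →
        μ.map X' = (volume : Measure (Fin d → ℝ)).withDensity
            (fun u => ENNReal.ofReal (f u)) →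
        (∀ u v, |fj u v - f u * f v| ≤ C₀) →
        -- `Z = h(X,Y)`, `Z' = h(X',Y')` bounded by `L`
        (∀ᵐ ω ∂μ, |h (X ω) (Y ω)| ≤ L) →
        (∀ᵐ ω ∂μ, |h (X' ω) (Y' ω)| ≤ L) →
        -- `K_c` integrable and bounded
        Integrable Kc (volume : Measure (Fin d → ℝ)) →
        (∫ u, |Kc u|) ≤ KI →
        (∃ B : ℝ, ∀ u, |Kc u| ≤ B) →
        -- normalized kernel integral bound
        b ^ (-(d : ℝ)) * (∫ u, |Kc (fun k => (x k - u k) / b)| * f u) ≤ C₁ →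
        b ^ (-(d : ℝ)) *
            |(∫ ω, (h (X ω) (Y ω) * Kc (fun k => (x k - X ω k) / b)) *
                  (h (X' ω) (Y' ω) * Kc (fun k => (x k - X' ω k) / b)) ∂μ) -
              (∫ ω, h (X ω) (Y ω) * Kc (fun k => (x k - X ω k) / b) ∂μ) *
                (∫ ω, h (X' ω) (Y' ω) * Kc (fun k => (x k - X' ω k) / b) ∂μ)| ≤
          C * L ^ 2 * b ^ (d : ℝ) := by
  set A := C₁ + √C₀ * KI
  refine ⟨2 * A ^ 2 + C₀ * KI ^ 2 + 1, by positivity, ?_⟩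
  intro Ω _ μ _ X X' Y Y' h f fj Kc x b L hb hL hM hf hfj hlaw hlawX hlawX' hdep hZ hZ' hK hKI
    ⟨B, hB⟩ hC₁
  have hT : ∀ u : Fin d → ℝ, (fun k => (x k - u k) / b) = b⁻¹ • (x - u) := fun u => by
    ext k; simp [div_eq_inv_mul]
  have hbd : 0 < b ^ d := pow_pos hb d
  simp only [hT, Real.rpow_neg hb.le, Real.rpow_natCast] at hC₁ ⊢
  rw [Measure.volume_eq_prod] at hlaw
  have hD : HasJointDensity μ volume X X' f fj :=
    ⟨measurable_fst.comp hM, measurable_fst.comp (measurable_snd.comp hM), hf, hfj, hlaw, hlawX,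
      hlawX'⟩
  set φ := fun u : Fin d → ℝ => Kc (b⁻¹ • (x - u))
  have hφ : Integrable φ := (hK.comp_smul (inv_ne_zero hb.ne')).comp_sub_left x
  have hφ_int : ∫ u, |φ u| = b ^ d * ∫ u, |Kc u| := by
    simpa using integral_comp_inv_smul_sub volume (fun v => |Kc v|) x hb
  have hN : ∫ u, |φ u| ≤ b ^ d * KI := hφ_int ▸ mul_le_mul_of_nonneg_left hKI hbd.le
  have hfirst : ∫ ω, |φ (X ω)| ∂μ ≤ A * b ^ d := by
    have := integral_comp_le_integral_mul_add (g := fun u => |φ u|) (fun u => abs_nonneg _)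
      (fun u => hB _) hφ.abs hD hdep
    rw [inv_mul_le_iff₀ hbd] at hC₁
    linarith [mul_le_mul_of_nonneg_left hN (Real.sqrt_nonneg C₀)]
  have hcov := abs_integral_comp_mul_sub_le hφ (fun u => hB _) hZ hZ' hD hdep
  rw [inv_mul_le_iff₀ hbd]
  calc _ ≤ L ^ 2 * (2 * (∫ ω, |φ (X ω)| ∂μ) ^ 2 + C₀ * (∫ u, |φ u|) ^ 2) := hcov
    _ ≤ L ^ 2 * (2 * (A * b ^ d) ^ 2 + C₀ * (b ^ d * KI) ^ 2) := by gcongr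
    _ ≤ b ^ d * ((2 * A ^ 2 + C₀ * KI ^ 2 + 1) * L ^ 2 * b ^ d) := by
        nlinarith [mul_pos (pow_pos hL 2) (mul_pos hbd hbd)]

/-- Covariance bound (5.5) for truncated kernel-weighted variables:
`b^{-d} |Cov(Z K_c((x-X)/b), Z' K_c((x-X')/b))| ≤ C L² b^d`. -/
theorem stmt_9 (d : ℕ) (hd : 0 < d) (C₀ C₁ KI : ℝ)
    (hC₀ : 0 ≤ C₀) (hC₁ : 0 ≤ C₁) (hKI : 0 ≤ KI) :
    ∃ C : ℝ, 0 < C ∧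
      ∀ (Ω : Type) [m0 : MeasurableSpace Ω] (μ : Measure Ω),
        IsProbabilityMeasure μ →
      ∀ (X X' : Ω → (Fin d → ℝ)) (Y Y' : Ω → ℝ)
        (h : (Fin d → ℝ) → ℝ → ℝ) (f : (Fin d → ℝ) → ℝ)
        (fj : (Fin d → ℝ) → (Fin d → ℝ) → ℝ)
        (Kc : (Fin d → ℝ) → ℝ) (x : Fin d → ℝ) (b L : ℝ), 0 < b → 0 < L →
        Measurable (fun ω => (X ω, X' ω, Y ω, Y' ω)) →
        Measurable f → Measurable (fun p : (Fin d → ℝ) × (Fin d → ℝ) => fj p.1 p.2) →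
        -- joint density of `(X, X')` and common marginal density `f`
        μ.map (fun ω => (X ω, X' ω)) =
          (volume : Measure ((Fin d → ℝ) × (Fin d → ℝ))).withDensity
            (fun p => ENNReal.ofReal (fj p.1 p.2)) →
        μ.map X = (volume : Measure (Fin d → ℝ)).withDensity
            (fun u => ENNReal.ofReal (f u)) →
        μ.map X' = (volume : Measure (Fin d → ℝ)).withDensity
            (fun u => ENNReal.ofReal (f u)) →
        (∀ u v, |fj u v - f u * f v| ≤ C₀) →
        -- `Z = h(X,Y)`, `Z' = h(X',Y')` bounded by `L`
        (∀ᵐ ω ∂μ, |h (X ω) (Y ω)| ≤ L) →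
        (∀ᵐ ω ∂μ, |h (X' ω) (Y' ω)| ≤ L) →
        -- `K_c` integrable and bounded
        Integrable Kc (volume : Measure (Fin d → ℝ)) →
        (∫ u, |Kc u|) ≤ KI →
        (∃ B : ℝ, ∀ u, |Kc u| ≤ B) →
        -- normalized kernel integral bound
        b ^ (-(d : ℝ)) * (∫ u, |Kc (fun k => (x k - u k) / b)| * f u) ≤ C₁ →
        b ^ (-(d : ℝ)) *
            |(∫ ω, (h (X ω) (Y ω) * Kc (fun k => (x k - X ω k) / b)) *
                  (h (X' ω) (Y' ω) * Kc (fun k => (x k - X' ω k) / b)) ∂μ) -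
              (∫ ω, h (X ω) (Y ω) * Kc (fun k => (x k - X ω k) / b) ∂μ) *
                (∫ ω, h (X' ω) (Y' ω) * Kc (fun k => (x k - X' ω k) / b) ∂μ)| ≤
          C * L ^ 2 * b ^ (d : ℝ) :=
  stmt_9_general d C₀ C₁ KI hC₀
end

section
/- Let r, s, h ∈ [1, ∞) with 1/r + 1/s + 1/h = 1, and let X ∈ L^r, Y ∈ L^s be real random variables measurable with respect to σ-fields 𝒜 and ℬ respectively. Then |E[XY] − E[X]E[Y]| ≤ C ‖X‖_r ‖Y‖_s α(𝒜, ℬ)^{1/h}, where α(𝒜,ℬ) is the strong mixing coefficient and C is a universal constant (one may take C = 10). -/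
/-!
Truncate `X` and `Y` at levels `M` and `N` chosen so that `E|X|^r = α M^r` and `E|Y|^s = α N^s`.
For the truncated variables the layer-cake formula `c = ∫₀^M (1{t < c} - 1{t < -c}) dt` writes the
covariance as an average over `(t, u) ∈ (0, M) × (0, N)` of covariances of differences of
indicators of events of `𝒜` and `ℬ`, each at most `4α`; so it is at most `4αMN`. The tails have
first moments at most `αM` and `αN` (Markov), and Young's inequality bounds the mean of their
product by `αMN`. Expanding the covariance bilinearly gives `10αMN = 10 ‖X‖_r ‖Y‖_s α^{1/h}`.
-/

open MeasureTheory ProbabilityTheory Set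

noncomputable def clip (M c : ℝ) : ℝ := max (-M) (min M c)

lemma continuous_clip (M : ℝ) : Continuous (clip M) :=
  continuous_const.max (continuous_const.min continuous_id)

lemma abs_clip_le {M : ℝ} (hM : 0 ≤ M) (c : ℝ) : |clip M c| ≤ M :=
  abs_le.2 ⟨le_max_left _ _, max_le (by linarith) (min_le_left _ _)⟩

lemma clip_eq_self {M c : ℝ} (h : |c| ≤ M) : clip M c = c := by
  rw [clip, min_eq_right (abs_le.1 h).2, max_eq_right (abs_le.1 h).1]

lemma abs_sub_clip_le {M : ℝ} (hM : 0 ≤ M) (c : ℝ) : |c - clip M c| ≤ |c| := by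
  rcases le_total |c| M with h | h
  · rw [clip_eq_self h, sub_self, abs_zero]; exact abs_nonneg c
  · unfold clip
    rcases abs_cases c with ⟨hc, -⟩ | ⟨hc, -⟩
    · rw [min_eq_left (by linarith), max_eq_right (by linarith), abs_of_nonneg (by linarith)]
      linarith
    · rw [min_eq_right (by linarith), max_eq_left (by linarith), abs_of_nonpos (by linarith)]
      linarith

lemma abs_sub_clip_le_rpow {M r : ℝ} (hM : 0 < M) (hr : 1 ≤ r) (c : ℝ) :
    |c - clip M c| ≤ |c| ^ r * M ^ (1 - r) := by
  rcases le_or_gt |c| M with h | h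
  · rw [clip_eq_self h, sub_self, abs_zero]; positivity
  · have hc : 0 < |c| := hM.trans h
    calc |c - clip M c| ≤ |c| := abs_sub_clip_le hM.le c
      _ = |c| ^ r * |c| ^ (1 - r) := by rw [← Real.rpow_add hc, add_sub_cancel, Real.rpow_one]
      _ ≤ |c| ^ r * M ^ (1 - r) := by
        gcongr |c| ^ r * ?_
        exact Real.rpow_le_rpow_of_nonpos hM h.le (by linarith)

/-- Young's inequality for the exponents `r` and `r / (r - 1) ≤ s`. -/
lemma mul_le_inv_mul_rpow_add {x y r s : ℝ} (hx : 1 ≤ x) (hy : 1 ≤ y) (hr : 1 ≤ r) (hs : 0 < s)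
    (hrs : 1 / r + 1 / s ≤ 1) : x * y ≤ r⁻¹ * x ^ r + (1 - r⁻¹) * y ^ s := by
  have hw : 0 ≤ 1 - r⁻¹ := sub_nonneg.2 (inv_le_one_of_one_le₀ hr)
  have hx' : (x ^ r) ^ r⁻¹ = x := Real.rpow_rpow_inv (by linarith) (by positivity)
  have hy' : y ≤ (y ^ s) ^ (1 - r⁻¹) := by
    rw [← Real.rpow_mul (by linarith)]
    calc y = y ^ (1 : ℝ) := (Real.rpow_one y).symm
      _ ≤ y ^ (s * (1 - r⁻¹)) := by
        refine Real.rpow_le_rpow_of_exponent_le hy ?_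
        rw [← div_le_iff₀' hs]
        linarith [one_div r]
  calc x * y ≤ (x ^ r) ^ r⁻¹ * (y ^ s) ^ (1 - r⁻¹) := by
        rw [hx']; gcongr
    _ ≤ r⁻¹ * x ^ r + (1 - r⁻¹) * y ^ s :=
        Real.geom_mean_le_arith_mean2_weighted (by positivity) hw (by positivity) (by positivity)
          (by ring)

lemma abs_sub_clip_mul_abs_sub_clip_le {M N r s : ℝ} (hM : 0 < M) (hN : 0 < N) (hr : 1 ≤ r)
    (hs : 1 ≤ s) (hrs : 1 / r + 1 / s ≤ 1) (c d : ℝ) :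
    |c - clip M c| * |d - clip N d| ≤
      r⁻¹ * (|c| ^ r * M ^ (1 - r)) * N + (1 - r⁻¹) * (|d| ^ s * N ^ (1 - s)) * M := by
  have hw : 0 ≤ 1 - r⁻¹ := sub_nonneg.2 (inv_le_one_of_one_le₀ hr)
  have hrhs : 0 ≤ r⁻¹ * (|c| ^ r * M ^ (1 - r)) * N + (1 - r⁻¹) * (|d| ^ s * N ^ (1 - s)) * M :=
    add_nonneg (by positivity) (mul_nonneg (mul_nonneg hw (by positivity)) hM.le)
  rcases le_or_gt |c| M with hc | hc
  · rwa [clip_eq_self hc, sub_self, abs_zero, zero_mul]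
  rcases le_or_gt |d| N with hd | hd
  · rwa [clip_eq_self hd, sub_self, abs_zero, mul_zero]
  have hscale : ∀ {K e p : ℝ}, 0 < K → K * (|e| / K) ^ p = |e| ^ p * K ^ (1 - p) := fun hK => by
    rw [Real.div_rpow (abs_nonneg _) hK.le, Real.rpow_sub hK, Real.rpow_one]
    field_simp
  calc |c - clip M c| * |d - clip N d| ≤ |c| * |d| :=
        mul_le_mul (abs_sub_clip_le hM.le c) (abs_sub_clip_le hN.le d) (abs_nonneg _) (abs_nonneg _)
    _ = M * N * (|c| / M * (|d| / N)) := by field_simp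
    _ ≤ M * N * (r⁻¹ * (|c| / M) ^ r + (1 - r⁻¹) * (|d| / N) ^ s) := by
        gcongr
        exact mul_le_inv_mul_rpow_add ((one_le_div hM).2 hc.le) ((one_le_div hN).2 hd.le) hr
          (by linarith) hrs
    _ = _ := by rw [← hscale hM, ← hscale hN]; ring

lemma mul_rpow_one_sub_le {A α M r : ℝ} (hM : 0 < M) (h : A ≤ α * M ^ r) :
    A * M ^ (1 - r) ≤ α * M :=
  calc A * M ^ (1 - r) ≤ α * M ^ r * M ^ (1 - r) := by gcongr
    _ = α * M := by rw [mul_assoc, ← Real.rpow_add hM, add_sub_cancel, Real.rpow_one]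

/-- For `|c| ≤ M`, `c = ∫₀^M signedLayer c t dt` (layer-cake formula for `c⁺` and `c⁻`). -/
noncomputable def signedLayer (c t : ℝ) : ℝ := (Iio c).indicator 1 t - (Iio (-c)).indicator 1 t

lemma abs_signedLayer_le (c t : ℝ) : |signedLayer c t| ≤ 1 := by
  unfold signedLayer
  by_cases h₁ : t < c <;> by_cases h₂ : t < -c <;> simp [indicator, h₁, h₂]

lemma measurable_signedLayer : Measurable fun p : ℝ × ℝ => signedLayer p.1 p.2 := by
  have h : ∀ f : ℝ × ℝ → ℝ, Measurable f →
      Measurable fun p : ℝ × ℝ => (Iio (f p)).indicator (1 : ℝ → ℝ) p.2 := fun f hf => by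
    simp only [indicator_apply, mem_Iio, Pi.one_apply]
    exact Measurable.ite (measurableSet_lt measurable_snd hf) measurable_const measurable_const
  exact (h _ measurable_fst).sub (h _ measurable_fst.neg)

lemma setIntegral_Ioo_indicator_Iio {c M : ℝ} (hc : c ≤ M) :
    ∫ t in Ioo 0 M, (Iio c).indicator 1 t = max c 0 := by
  rw [integral_indicator_one measurableSet_Iio, measureReal_restrict_apply measurableSet_Iio,
    show Iio c ∩ Ioo 0 M = Ioo 0 c from Iio_inter_Ioo.trans (by rw [min_eq_left hc]),
    Real.volume_real_Ioo, sub_zero]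

lemma setIntegral_signedLayer {c M : ℝ} (h : |c| ≤ M) : ∫ t in Ioo 0 M, signedLayer c t = c := by
  have hint : ∀ a : ℝ, Integrable ((Iio a).indicator (1 : ℝ → ℝ)) (volume.restrict (Ioo 0 M)) :=
    fun a => (integrable_const 1).indicator measurableSet_Iio
  rw [abs_le] at h
  simp only [signedLayer]
  rw [integral_sub (hint c) (hint (-c)), setIntegral_Ioo_indicator_Iio h.2,
    setIntegral_Ioo_indicator_Iio (by linarith), max_zero_sub_max_neg_zero_eq_self]

lemma signedLayer_comp {Ω : Type*} (U : Ω → ℝ) (t : ℝ) :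
    (fun ω => signedLayer (U ω) t) =
      fun ω => (U ⁻¹' Ioi t).indicator 1 ω - (U ⁻¹' Iio (-t)).indicator 1 ω := by
  ext ω
  simp only [signedLayer, indicator, mem_Iio, mem_preimage, mem_Ioi, lt_neg, Pi.one_apply]

lemma measurable_signedLayer_comp {Ω : Type*} [MeasurableSpace Ω] {U : Ω → ℝ}
    (hU : Measurable U) :
    Measurable (Function.uncurry fun ω t => signedLayer (U ω) t) :=
  measurable_signedLayer.comp ((hU.comp measurable_fst).prodMk measurable_snd)

lemma abs_setIntegral_Ioo_le {f : ℝ → ℝ} {C M : ℝ} (hM : 0 ≤ M) (h : ∀ t, |f t| ≤ C) :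
    |∫ t in Ioo 0 M, f t| ≤ C * M := by
  simpa [measureReal_restrict_apply_univ, Real.volume_real_Ioo, hM] using
    norm_integral_le_of_norm_le_const (μ := volume.restrict (Ioo (0 : ℝ) M))
      (ae_of_all _ fun t => (Real.norm_eq_abs _).trans_le (h t))

/-- Unlike `ProbabilityTheory.covariance`, this form needs no `L²` assumption to be meaningful. -/
noncomputable def cov {Ω : Type*} [MeasurableSpace Ω] (μ : Measure Ω) (f g : Ω → ℝ) : ℝ :=
  ∫ ω, f ω * g ω ∂μ - (∫ ω, f ω ∂μ) * ∫ ω, g ω ∂μ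

section Covariance

variable {Ω : Type*} [MeasurableSpace Ω] {μ : Measure Ω} {f g : Ω → ℝ}

lemma cov_comm (μ : Measure Ω) (f g : Ω → ℝ) : cov μ f g = cov μ g f := by
  simp only [cov, mul_comm]

lemma abs_cov_le (μ : Measure Ω) (f g : Ω → ℝ) :
    |cov μ f g| ≤ ∫ ω, |f ω| * |g ω| ∂μ + (∫ ω, |f ω| ∂μ) * ∫ ω, |g ω| ∂μ := by
  calc |cov μ f g| ≤ |∫ ω, f ω * g ω ∂μ| + |∫ ω, f ω ∂μ| * |∫ ω, g ω ∂μ| := by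
        rw [cov, ← abs_mul]; exact abs_sub _ _
    _ ≤ _ := by
        gcongr
        · simpa only [abs_mul] using abs_integral_le_integral_abs (f := fun ω => f ω * g ω) (μ := μ)
        all_goals exact abs_integral_le_integral_abs

lemma cov_eq_zero_of_ae_eq_zero_left (hf : f =ᵐ[μ] 0) : cov μ f g = 0 := by
  have hfg : ∫ ω, f ω * g ω ∂μ = 0 :=
    integral_eq_zero_of_ae (by filter_upwards [hf] with ω hω; simp [hω])
  rw [cov, hfg, integral_eq_zero_of_ae hf, zero_mul, sub_zero]

lemma cov_add_add {f₁ f₂ g₁ g₂ : Ω → ℝ} (hf₁ : Integrable f₁ μ) (hf₂ : Integrable f₂ μ)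
    (hg₁ : Integrable g₁ μ) (hg₂ : Integrable g₂ μ)
    (h₁₁ : Integrable (fun ω => f₁ ω * g₁ ω) μ) (h₁₂ : Integrable (fun ω => f₁ ω * g₂ ω) μ)
    (h₂₁ : Integrable (fun ω => f₂ ω * g₁ ω) μ) (h₂₂ : Integrable (fun ω => f₂ ω * g₂ ω) μ) :
    cov μ (fun ω => f₁ ω + f₂ ω) (fun ω => g₁ ω + g₂ ω) =
      cov μ f₁ g₁ + cov μ f₁ g₂ + cov μ f₂ g₁ + cov μ f₂ g₂ := by
  simp only [cov, add_mul, mul_add]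
  rw [integral_add (h₁₁.fun_add h₂₁) (h₁₂.fun_add h₂₂), integral_add h₁₁ h₂₁,
    integral_add h₁₂ h₂₂, integral_add hf₁ hf₂, integral_add hg₁ hg₂]
  ring

lemma cov_sub_sub {f₁ f₂ g₁ g₂ : Ω → ℝ} (hf₁ : Integrable f₁ μ) (hf₂ : Integrable f₂ μ)
    (hg₁ : Integrable g₁ μ) (hg₂ : Integrable g₂ μ)
    (h₁₁ : Integrable (fun ω => f₁ ω * g₁ ω) μ) (h₁₂ : Integrable (fun ω => f₁ ω * g₂ ω) μ)
    (h₂₁ : Integrable (fun ω => f₂ ω * g₁ ω) μ) (h₂₂ : Integrable (fun ω => f₂ ω * g₂ ω) μ) :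
    cov μ (fun ω => f₁ ω - f₂ ω) (fun ω => g₁ ω - g₂ ω) =
      cov μ f₁ g₁ - cov μ f₁ g₂ - cov μ f₂ g₁ + cov μ f₂ g₂ := by
  simp only [cov, sub_mul, mul_sub]
  rw [integral_sub (h₁₁.sub' h₂₁) (h₁₂.sub' h₂₂), integral_sub h₁₁ h₂₁,
    integral_sub h₁₂ h₂₂, integral_sub hf₁ hf₂, integral_sub hg₁ hg₂]
  ring

lemma cov_indicator_one {A B : Set Ω} (hA : MeasurableSet A) (hB : MeasurableSet B) :
    cov μ (A.indicator 1) (B.indicator 1) = μ.real (A ∩ B) - μ.real A * μ.real B := by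
  rw [cov, ← integral_indicator_one hA, ← integral_indicator_one hB,
    ← integral_indicator_one (hA.inter hB), inter_indicator_one]
  rfl

lemma abs_cov_le_of_abs_le [IsProbabilityMeasure μ] {N : ℝ} (hf : Integrable f μ)
    (hg : ∀ ω, |g ω| ≤ N) : |cov μ f g| ≤ 2 * N * ∫ ω, |f ω| ∂μ := by
  have hfg : ∫ ω, |f ω| * |g ω| ∂μ ≤ ∫ ω, |f ω| * N ∂μ :=
    integral_mono_of_nonneg (ae_of_all _ fun _ => by positivity) (hf.abs.mul_const N)
      (ae_of_all _ fun ω => mul_le_mul_of_nonneg_left (hg ω) (abs_nonneg _))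
  have hg' : ∫ ω, |g ω| ∂μ ≤ N := (le_abs_self _).trans <| by
    simpa using norm_integral_le_of_norm_le_const (μ := μ) (f := fun ω => |g ω|)
      (ae_of_all _ fun ω => (norm_abs_eq_norm (g ω)).trans_le (hg ω))
  calc |cov μ f g| ≤ ∫ ω, |f ω| * |g ω| ∂μ + (∫ ω, |f ω| ∂μ) * ∫ ω, |g ω| ∂μ := abs_cov_le μ f g
    _ ≤ (∫ ω, |f ω| ∂μ) * N + (∫ ω, |f ω| ∂μ) * N := by
        rw [integral_mul_const] at hfg
        gcongr
    _ = 2 * N * ∫ ω, |f ω| ∂μ := by ring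

lemma cov_integral_left [IsFiniteMeasure μ] {T : Type*} [MeasurableSpace T] {ν : Measure T}
    [IsFiniteMeasure ν] {F : Ω → T → ℝ} (hF : Measurable (Function.uncurry F)) {C : ℝ}
    (hFC : ∀ ω t, |F ω t| ≤ C) (hg : Integrable g μ) :
    cov μ (fun ω => ∫ t, F ω t ∂ν) g = ∫ t, cov μ (fun ω => F ω t) g ∂ν := by
  have hFi : Integrable (Function.uncurry F) (μ.prod ν) :=
    .of_bound hF.aestronglyMeasurable C (ae_of_all _ fun p => hFC p.1 p.2)
  have hFgi : Integrable (Function.uncurry fun ω t => F ω t * g ω) (μ.prod ν) :=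
    (hg.comp_fst ν).bdd_mul hF.aestronglyMeasurable (ae_of_all _ fun p => hFC p.1 p.2)
  have hFg : ∫ ω, (∫ t, F ω t ∂ν) * g ω ∂μ = ∫ t, ∫ ω, F ω t * g ω ∂μ ∂ν := by
    simp_rw [← integral_mul_const]
    exact integral_integral_swap hFgi
  rw [cov, hFg, integral_integral_swap hFi, ← integral_mul_const]
  exact (integral_sub hFgi.integral_prod_right (hFi.integral_prod_right.mul_const _)).symm

end Covariance

section Truncation

variable {Ω : Type*} [MeasurableSpace Ω] {μ : Measure Ω} {X Y : Ω → ℝ} {α M N r s : ℝ}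

lemma ae_eq_zero_of_integral_rpow_abs_eq_zero (hXr : Integrable (fun ω => |X ω| ^ r) μ)
    (h : ∫ ω, |X ω| ^ r ∂μ = 0) : X =ᵐ[μ] 0 := by
  filter_upwards [(integral_eq_zero_iff_of_nonneg (fun _ => by positivity) hXr).1 h] with ω hω
  exact abs_eq_zero.1 ((Real.rpow_eq_zero_iff_of_nonneg (abs_nonneg _)).1 hω).1

lemma integrable_sub_clip (hX : AEStronglyMeasurable X μ) (hM : 0 < M) (hr : 1 ≤ r)
    (hXr : Integrable (fun ω => |X ω| ^ r) μ) : Integrable (fun ω => X ω - clip M (X ω)) μ :=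
  (hXr.mul_const _).mono' (hX.sub ((continuous_clip M).comp_aestronglyMeasurable hX))
    (ae_of_all _ fun ω => abs_sub_clip_le_rpow hM hr (X ω))

lemma integral_abs_sub_clip_le (hM : 0 < M) (hr : 1 ≤ r)
    (hXr : Integrable (fun ω => |X ω| ^ r) μ) (hXM : ∫ ω, |X ω| ^ r ∂μ ≤ α * M ^ r) :
    ∫ ω, |X ω - clip M (X ω)| ∂μ ≤ α * M := by
  refine (integral_mono_of_nonneg (ae_of_all _ fun _ => abs_nonneg _) (hXr.mul_const _)
    (ae_of_all _ fun ω => abs_sub_clip_le_rpow hM hr (X ω))).trans ?_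
  rw [integral_mul_const]
  exact mul_rpow_one_sub_le hM hXM

lemma integrable_sub_clip_mul_sub_clip (hX : AEStronglyMeasurable X μ)
    (hY : AEStronglyMeasurable Y μ) (hM : 0 < M) (hN : 0 < N) (hr : 1 ≤ r) (hs : 1 ≤ s)
    (hrs : 1 / r + 1 / s ≤ 1) (hXr : Integrable (fun ω => |X ω| ^ r) μ)
    (hYs : Integrable (fun ω => |Y ω| ^ s) μ) :
    Integrable (fun ω => (X ω - clip M (X ω)) * (Y ω - clip N (Y ω))) μ :=
  ((((hXr.mul_const _).const_mul r⁻¹).mul_const N).add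
      (((hYs.mul_const _).const_mul (1 - r⁻¹)).mul_const M)).mono'
    ((hX.sub ((continuous_clip M).comp_aestronglyMeasurable hX)).mul
      (hY.sub ((continuous_clip N).comp_aestronglyMeasurable hY)))
    (ae_of_all _ fun ω => (abs_mul _ _).trans_le
      (abs_sub_clip_mul_abs_sub_clip_le hM hN hr hs hrs (X ω) (Y ω)))

lemma integral_abs_sub_clip_mul_abs_sub_clip_le (hM : 0 < M) (hN : 0 < N) (hr : 1 ≤ r)
    (hs : 1 ≤ s) (hrs : 1 / r + 1 / s ≤ 1) (hXr : Integrable (fun ω => |X ω| ^ r) μ)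
    (hYs : Integrable (fun ω => |Y ω| ^ s) μ) (hXM : ∫ ω, |X ω| ^ r ∂μ ≤ α * M ^ r)
    (hYN : ∫ ω, |Y ω| ^ s ∂μ ≤ α * N ^ s) :
    ∫ ω, |X ω - clip M (X ω)| * |Y ω - clip N (Y ω)| ∂μ ≤ α * M * N := by
  have hXi := ((hXr.mul_const (M ^ (1 - r))).const_mul r⁻¹).mul_const N
  have hYi := ((hYs.mul_const (N ^ (1 - s))).const_mul (1 - r⁻¹)).mul_const M
  have hw : 0 ≤ 1 - r⁻¹ := sub_nonneg.2 (inv_le_one_of_one_le₀ hr)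
  calc _ ≤ ∫ ω, (r⁻¹ * (|X ω| ^ r * M ^ (1 - r)) * N +
          (1 - r⁻¹) * (|Y ω| ^ s * N ^ (1 - s)) * M) ∂μ :=
        integral_mono_of_nonneg (ae_of_all _ fun _ => by positivity) (hXi.fun_add hYi)
          (ae_of_all _ fun ω => abs_sub_clip_mul_abs_sub_clip_le hM hN hr hs hrs (X ω) (Y ω))
    _ = r⁻¹ * ((∫ ω, |X ω| ^ r ∂μ) * M ^ (1 - r)) * N +
          (1 - r⁻¹) * ((∫ ω, |Y ω| ^ s ∂μ) * N ^ (1 - s)) * M := by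
        rw [integral_add hXi hYi]
        simp only [integral_mul_const, integral_const_mul]
    _ ≤ r⁻¹ * (α * M) * N + (1 - r⁻¹) * (α * N) * M := by
        gcongr _ * ?_ * _ + _ * ?_ * _
        exacts [mul_rpow_one_sub_le hM hXM, mul_rpow_one_sub_le hN hYN]
    _ = α * M * N := by ring

lemma cov_eq_sum_cov_clip [IsFiniteMeasure μ] (hX : AEStronglyMeasurable X μ)
    (hY : AEStronglyMeasurable Y μ) (hM : 0 < M) (hN : 0 < N) (hr : 1 ≤ r) (hs : 1 ≤ s)
    (hrs : 1 / r + 1 / s ≤ 1) (hXr : Integrable (fun ω => |X ω| ^ r) μ)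
    (hYs : Integrable (fun ω => |Y ω| ^ s) μ) :
    cov μ X Y = cov μ (fun ω => clip M (X ω)) (fun ω => clip N (Y ω)) +
      cov μ (fun ω => clip M (X ω)) (fun ω => Y ω - clip N (Y ω)) +
      cov μ (fun ω => X ω - clip M (X ω)) (fun ω => clip N (Y ω)) +
      cov μ (fun ω => X ω - clip M (X ω)) (fun ω => Y ω - clip N (Y ω)) := by
  have hX₀ := (continuous_clip M).comp_aestronglyMeasurable hX
  have hY₀ := (continuous_clip N).comp_aestronglyMeasurable hY
  have hX₀M : ∀ᵐ ω ∂μ, ‖clip M (X ω)‖ ≤ M := ae_of_all _ fun ω => abs_clip_le hM.le (X ω)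
  have hY₀N : ∀ᵐ ω ∂μ, ‖clip N (Y ω)‖ ≤ N := ae_of_all _ fun ω => abs_clip_le hN.le (Y ω)
  have hY₀i : Integrable (fun ω => clip N (Y ω)) μ := .of_bound hY₀ N hY₀N
  have hX₁i := integrable_sub_clip hX hM hr hXr
  have hY₁i := integrable_sub_clip hY hN hs hYs
  rw [← cov_add_add (.of_bound hX₀ M hX₀M) hX₁i hY₀i hY₁i (hY₀i.bdd_mul hX₀ hX₀M)
    (hY₁i.bdd_mul hX₀ hX₀M) (hX₁i.mul_bdd hY₀ hY₀N)
    (integrable_sub_clip_mul_sub_clip hX hY hM hN hr hs hrs hXr hYs)]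
  simp only [add_sub_cancel]

end Truncation

noncomputable def strongMixingCoeff {Ω : Type*} [MeasurableSpace Ω] (μ : Measure Ω)
    (𝒜 ℬ : MeasurableSpace Ω) : ℝ :=
  sSup {t : ℝ | ∃ A B : Set Ω, MeasurableSet[𝒜] A ∧ MeasurableSet[ℬ] B ∧
    t = |μ.real (A ∩ B) - μ.real A * μ.real B|}

section Mixing

variable {Ω : Type*} {𝒜 ℬ : MeasurableSpace Ω} [mΩ : MeasurableSpace Ω] {μ : Measure Ω}
  [IsProbabilityMeasure μ]

lemma abs_measureReal_inter_sub_mul_le_one (A B : Set Ω) :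
    |μ.real (A ∩ B) - μ.real A * μ.real B| ≤ 1 :=
  abs_sub_le_of_nonneg_of_le measureReal_nonneg measureReal_le_one
    (mul_nonneg measureReal_nonneg measureReal_nonneg)
    (mul_le_one₀ measureReal_le_one measureReal_nonneg measureReal_le_one)

lemma abs_measureReal_inter_sub_mul_le_strongMixingCoeff {A B : Set Ω} (hA : MeasurableSet[𝒜] A)
    (hB : MeasurableSet[ℬ] B) :
    |μ.real (A ∩ B) - μ.real A * μ.real B| ≤ strongMixingCoeff μ 𝒜 ℬ :=
  le_csSup ⟨1, by rintro _ ⟨A, B, -, -, rfl⟩; exact abs_measureReal_inter_sub_mul_le_one A B⟩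
    ⟨A, B, hA, hB, rfl⟩

lemma strongMixingCoeff_nonneg : 0 ≤ strongMixingCoeff μ 𝒜 ℬ :=
  (abs_nonneg _).trans (abs_measureReal_inter_sub_mul_le_strongMixingCoeff (μ := μ)
    (@MeasurableSet.empty _ 𝒜) (@MeasurableSet.empty _ ℬ))

lemma strongMixingCoeff_le_one : strongMixingCoeff μ 𝒜 ℬ ≤ 1 :=
  csSup_le ⟨_, ∅, ∅, @MeasurableSet.empty _ 𝒜, @MeasurableSet.empty _ ℬ, rfl⟩
    (by rintro _ ⟨A, B, -, -, rfl⟩; exact abs_measureReal_inter_sub_mul_le_one A B)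

lemma indepFun_of_strongMixingCoeff_eq_zero (h : strongMixingCoeff μ 𝒜 ℬ = 0) {X Y : Ω → ℝ}
    (hX : Measurable[𝒜] X) (hY : Measurable[ℬ] Y) : IndepFun X Y μ := by
  rw [indepFun_iff_measure_inter_preimage_eq_mul]
  intro s t hs ht
  have hst := abs_measureReal_inter_sub_mul_le_strongMixingCoeff (μ := μ) (hX hs) (hY ht)
  rw [h, abs_nonpos_iff, sub_eq_zero] at hst
  rwa [← ENNReal.toReal_eq_toReal_iff' (measure_ne_top _ _)
    (ENNReal.mul_ne_top (measure_ne_top _ _) (measure_ne_top _ _)), ENNReal.toReal_mul]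

lemma cov_eq_zero_of_strongMixingCoeff_eq_zero (h𝒜 : 𝒜 ≤ mΩ) (hℬ : ℬ ≤ mΩ)
    (h : strongMixingCoeff μ 𝒜 ℬ = 0) {X Y : Ω → ℝ} (hX : Measurable[𝒜] X)
    (hY : Measurable[ℬ] Y) : cov μ X Y = 0 :=
  sub_eq_zero.2 <| (indepFun_of_strongMixingCoeff_eq_zero h hX hY).integral_mul_eq_mul_integral
    (hX.mono h𝒜 le_rfl).aestronglyMeasurable (hY.mono hℬ le_rfl).aestronglyMeasurable

lemma abs_cov_indicator_sub_indicator_le (h𝒜 : 𝒜 ≤ mΩ) (hℬ : ℬ ≤ mΩ) {A₁ A₂ B₁ B₂ : Set Ω}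
    (hA₁ : MeasurableSet[𝒜] A₁) (hA₂ : MeasurableSet[𝒜] A₂)
    (hB₁ : MeasurableSet[ℬ] B₁) (hB₂ : MeasurableSet[ℬ] B₂) :
    |cov μ (fun ω => A₁.indicator 1 ω - A₂.indicator 1 ω)
      (fun ω => B₁.indicator 1 ω - B₂.indicator 1 ω)| ≤ 4 * strongMixingCoeff μ 𝒜 ℬ := by
  have hi : ∀ {C : Set Ω}, MeasurableSet C → Integrable (C.indicator (1 : Ω → ℝ)) μ :=
    fun hC => (integrable_const 1).indicator hC
  have hii : ∀ {C D : Set Ω}, MeasurableSet C → MeasurableSet D →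
      Integrable (fun ω => C.indicator (1 : Ω → ℝ) ω * D.indicator 1 ω) μ := fun hC hD => by
    simpa only [inter_indicator_one] using! hi (hC.inter hD)
  have hA₁' := h𝒜 _ hA₁
  have hA₂' := h𝒜 _ hA₂
  have hB₁' := hℬ _ hB₁
  have hB₂' := hℬ _ hB₂
  rw [cov_sub_sub (hi hA₁') (hi hA₂') (hi hB₁') (hi hB₂') (hii hA₁' hB₁') (hii hA₁' hB₂')
    (hii hA₂' hB₁') (hii hA₂' hB₂'), cov_indicator_one hA₁' hB₁', cov_indicator_one hA₁' hB₂',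
    cov_indicator_one hA₂' hB₁', cov_indicator_one hA₂' hB₂']
  have h₁₁ := abs_measureReal_inter_sub_mul_le_strongMixingCoeff (μ := μ) hA₁ hB₁
  have h₁₂ := abs_measureReal_inter_sub_mul_le_strongMixingCoeff (μ := μ) hA₁ hB₂
  have h₂₁ := abs_measureReal_inter_sub_mul_le_strongMixingCoeff (μ := μ) hA₂ hB₁
  have h₂₂ := abs_measureReal_inter_sub_mul_le_strongMixingCoeff (μ := μ) hA₂ hB₂
  rw [abs_le] at *
  constructor <;> linarith

theorem abs_cov_le_strongMixingCoeff_of_abs_le (h𝒜 : 𝒜 ≤ mΩ) (hℬ : ℬ ≤ mΩ) {U V : Ω → ℝ}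
    (hU : Measurable[𝒜] U) (hV : Measurable[ℬ] V) {M N : ℝ} (hUM : ∀ ω, |U ω| ≤ M)
    (hVN : ∀ ω, |V ω| ≤ N) : |cov μ U V| ≤ 4 * strongMixingCoeff μ 𝒜 ℬ * M * N := by
  obtain ⟨ω₀⟩ := nonempty_of_isProbabilityMeasure μ
  have hM : 0 ≤ M := (abs_nonneg _).trans (hUM ω₀)
  have hN : 0 ≤ N := (abs_nonneg _).trans (hVN ω₀)
  have hlayer : ∀ {W : Ω → ℝ} {K : ℝ}, (∀ ω, |W ω| ≤ K) →
      W = fun ω => ∫ t in Ioo 0 K, signedLayer (W ω) t :=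
    fun hWK => funext fun ω => (setIntegral_signedLayer (hWK ω)).symm
  have hint : ∀ {W : Ω → ℝ} {K : ℝ}, Measurable W → (∀ ω, |W ω| ≤ K) → Integrable W μ :=
    fun hW hWK => .of_bound hW.aestronglyMeasurable _ (ae_of_all _ hWK)
  have hcov : cov μ U V = ∫ u in Ioo 0 N, ∫ t in Ioo 0 M,
      cov μ (fun ω => signedLayer (U ω) t) (fun ω => signedLayer (V ω) u) := by
    have hUm := hU.mono h𝒜 le_rfl
    have hVm := hV.mono hℬ le_rfl
    rw [cov_comm]
    conv_lhs => rw [hlayer hVN]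
    rw [cov_integral_left (measurable_signedLayer_comp hVm) (fun _ _ => abs_signedLayer_le _ _)
      (hint hUm hUM)]
    refine integral_congr_ae (ae_of_all _ fun u => ?_)
    dsimp only
    rw [cov_comm]
    conv_lhs => rw [hlayer hUM]
    exact cov_integral_left (measurable_signedLayer_comp hUm) (fun _ _ => abs_signedLayer_le _ _)
      (hint (measurable_signedLayer_comp hVm).of_uncurry_right fun _ => abs_signedLayer_le _ _)
  rw [hcov]
  refine abs_setIntegral_Ioo_le (C := 4 * strongMixingCoeff μ 𝒜 ℬ * M) hN fun u =>
    abs_setIntegral_Ioo_le (C := 4 * strongMixingCoeff μ 𝒜 ℬ) hM fun t => ?_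
  rw [signedLayer_comp, signedLayer_comp]
  exact abs_cov_indicator_sub_indicator_le h𝒜 hℬ (hU measurableSet_Ioi) (hU measurableSet_Iio)
    (hV measurableSet_Ioi) (hV measurableSet_Iio)

theorem abs_cov_le_strongMixingCoeff_of_integral_rpow_le (h𝒜 : 𝒜 ≤ mΩ) (hℬ : ℬ ≤ mΩ)
    {r s : ℝ} (hr : 1 ≤ r) (hs : 1 ≤ s) (hrs : 1 / r + 1 / s ≤ 1) {X Y : Ω → ℝ}
    (hX : Measurable[𝒜] X) (hY : Measurable[ℬ] Y) (hXr : Integrable (fun ω => |X ω| ^ r) μ)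
    (hYs : Integrable (fun ω => |Y ω| ^ s) μ) {M N : ℝ} (hM : 0 < M) (hN : 0 < N)
    (hXM : ∫ ω, |X ω| ^ r ∂μ ≤ strongMixingCoeff μ 𝒜 ℬ * M ^ r)
    (hYN : ∫ ω, |Y ω| ^ s ∂μ ≤ strongMixingCoeff μ 𝒜 ℬ * N ^ s) :
    |cov μ X Y| ≤ 10 * strongMixingCoeff μ 𝒜 ℬ * M * N := by
  set α := strongMixingCoeff μ 𝒜 ℬ
  have hα : 0 ≤ α := strongMixingCoeff_nonneg
  have hXm := (hX.mono h𝒜 le_rfl).aestronglyMeasurable (μ := μ)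
  have hYm := (hY.mono hℬ le_rfl).aestronglyMeasurable (μ := μ)
  rw [cov_eq_sum_cov_clip hXm hYm hM hN hr hs hrs hXr hYs]
  set X₀ := fun ω => clip M (X ω)
  set Y₀ := fun ω => clip N (Y ω)
  set X₁ := fun ω => X ω - clip M (X ω)
  set Y₁ := fun ω => Y ω - clip N (Y ω)
  have hX₀M : ∀ ω, |X₀ ω| ≤ M := fun ω => abs_clip_le hM.le (X ω)
  have hY₀N : ∀ ω, |Y₀ ω| ≤ N := fun ω => abs_clip_le hN.le (Y ω)
  have hX₁ : ∫ ω, |X₁ ω| ∂μ ≤ α * M := integral_abs_sub_clip_le hM hr hXr hXM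
  have hY₁ : ∫ ω, |Y₁ ω| ∂μ ≤ α * N := integral_abs_sub_clip_le hN hs hYs hYN
  have h₀₀ : |cov μ X₀ Y₀| ≤ 4 * α * M * N :=
    abs_cov_le_strongMixingCoeff_of_abs_le h𝒜 hℬ ((continuous_clip M).measurable.comp hX)
      ((continuous_clip N).measurable.comp hY) hX₀M hY₀N
  have h₀₁ : |cov μ X₀ Y₁| ≤ 2 * M * (α * N) := by
    rw [cov_comm]
    exact (abs_cov_le_of_abs_le (integrable_sub_clip hYm hN hs hYs) hX₀M).trans (by gcongr)
  have h₁₀ : |cov μ X₁ Y₀| ≤ 2 * N * (α * M) :=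
    (abs_cov_le_of_abs_le (integrable_sub_clip hXm hM hr hXr) hY₀N).trans (by gcongr)
  have h₁₁ : |cov μ X₁ Y₁| ≤ α * M * N + α * M * (α * N) :=
    (abs_cov_le μ X₁ Y₁).trans <| add_le_add
      (integral_abs_sub_clip_mul_abs_sub_clip_le hM hN hr hs hrs hXr hYs hXM hYN)
      (mul_le_mul hX₁ hY₁ (integral_nonneg fun _ => abs_nonneg _) (by positivity))
  have hαα : α * M * (α * N) ≤ α * M * N :=
    mul_le_mul_of_nonneg_left (mul_le_of_le_one_left hN.le strongMixingCoeff_le_one)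
      (by positivity)
  have hsum₄ := abs_add_le (cov μ X₀ Y₀ + cov μ X₀ Y₁ + cov μ X₁ Y₀) (cov μ X₁ Y₁)
  have hsum₃ := abs_add_three (cov μ X₀ Y₀) (cov μ X₀ Y₁) (cov μ X₁ Y₀)
  linarith

theorem abs_cov_le_strongMixingCoeff_rpow (h𝒜 : 𝒜 ≤ mΩ) (hℬ : ℬ ≤ mΩ) {r s h : ℝ}
    (hr : 1 ≤ r) (hs : 1 ≤ s) (hh : 1 ≤ h) (hrsh : 1 / r + 1 / s + 1 / h = 1) {X Y : Ω → ℝ}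
    (hX : Measurable[𝒜] X) (hY : Measurable[ℬ] Y) (hXr : Integrable (fun ω => |X ω| ^ r) μ)
    (hYs : Integrable (fun ω => |Y ω| ^ s) μ) :
    |cov μ X Y| ≤ 10 * (∫ ω, |X ω| ^ r ∂μ) ^ (1 / r) * (∫ ω, |Y ω| ^ s ∂μ) ^ (1 / s) *
      strongMixingCoeff μ 𝒜 ℬ ^ (1 / h) := by
  set α := strongMixingCoeff μ 𝒜 ℬ
  set A := ∫ ω, |X ω| ^ r ∂μ
  set B := ∫ ω, |Y ω| ^ s ∂μ
  have hα : 0 ≤ α := strongMixingCoeff_nonneg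
  have hA : 0 ≤ A := integral_nonneg fun _ => by positivity
  have hB : 0 ≤ B := integral_nonneg fun _ => by positivity
  rcases hα.eq_or_lt with hα₀ | hα
  · rw [cov_eq_zero_of_strongMixingCoeff_eq_zero h𝒜 hℬ hα₀.symm hX hY, abs_zero]; positivity
  rcases hA.eq_or_lt with hA₀ | hA
  · rw [cov_eq_zero_of_ae_eq_zero_left (ae_eq_zero_of_integral_rpow_abs_eq_zero hXr hA₀.symm),
      abs_zero]; positivity
  rcases hB.eq_or_lt with hB₀ | hB
  · rw [cov_comm,
      cov_eq_zero_of_ae_eq_zero_left (ae_eq_zero_of_integral_rpow_abs_eq_zero hYs hB₀.symm),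
      abs_zero]; positivity
  have hrs : 1 / r + 1 / s ≤ 1 := by linarith [one_div_nonneg.2 (zero_le_one.trans hh)]
  -- the truncation levels are `M = (A / α) ^ (1 / r)` and `N = (B / α) ^ (1 / s)`
  have hlevel : ∀ {C p : ℝ}, 0 < C → 1 ≤ p → C = α * ((C / α) ^ (1 / p)) ^ p := fun hC hp => by
    rw [← Real.rpow_mul (by positivity), one_div_mul_cancel (by positivity), Real.rpow_one,
      mul_div_cancel₀ _ hα.ne']
  calc |cov μ X Y| ≤ 10 * α * (A / α) ^ (1 / r) * (B / α) ^ (1 / s) :=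
        abs_cov_le_strongMixingCoeff_of_integral_rpow_le h𝒜 hℬ hr hs hrs hX hY hXr hYs
          (by positivity) (by positivity) (hlevel hA hr).le (hlevel hB hs).le
    _ = 10 * A ^ (1 / r) * B ^ (1 / s) * α ^ (1 / h) := by
        rw [Real.div_rpow hA.le hα.le, Real.div_rpow hB.le hα.le,
          show 1 / h = 1 - 1 / r - 1 / s by linarith, Real.rpow_sub hα, Real.rpow_sub hα,
          Real.rpow_one]
        field_simp

end Mixing

/-- Davydov's covariance inequality:
`|E[XY] - E[X]E[Y]| ≤ C ‖X‖_r ‖Y‖_s α(𝒜,ℬ)^{1/h}` for a universal constant `C`. -/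
theorem stmt_15 :
    ∃ C : ℝ, 0 < C ∧
      ∀ (Ω : Type) (𝒜 ℬ : MeasurableSpace Ω) [m0 : MeasurableSpace Ω]
        (μ : Measure Ω), IsProbabilityMeasure μ → 𝒜 ≤ m0 → ℬ ≤ m0 →
      ∀ (r s h : ℝ), 1 ≤ r → 1 ≤ s → 1 ≤ h → 1 / r + 1 / s + 1 / h = 1 →
      ∀ (X Y : Ω → ℝ), Measurable[𝒜] X → Measurable[ℬ] Y →
        Integrable (fun ω => |X ω| ^ r) μ →
        Integrable (fun ω => |Y ω| ^ s) μ →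
        |(∫ ω, X ω * Y ω ∂μ) - (∫ ω, X ω ∂μ) * ∫ ω, Y ω ∂μ| ≤
          C * (∫ ω, |X ω| ^ r ∂μ) ^ (1 / r) * (∫ ω, |Y ω| ^ s ∂μ) ^ (1 / s) *
            (sSup {t : ℝ | ∃ A B : Set Ω, MeasurableSet[𝒜] A ∧ MeasurableSet[ℬ] B ∧
                t = |(μ (A ∩ B)).toReal - (μ A).toReal * (μ B).toReal|}) ^ (1 / h) :=
  ⟨10, by norm_num, fun _ _ _ _ _ _ h𝒜 hℬ _ _ _ hr hs hh hrsh _ _ hX hY hXr hYs =>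
    abs_cov_le_strongMixingCoeff_rpow h𝒜 hℬ hr hs hh hrsh hX hY hXr hYs⟩
end
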